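/- For (u,v) ∈ Ω = [0,1] × [-1,1] and fixed N₀ ≤ -1, define M₂(u,v) = [-(2(1-2u)v - u(1-u)) + √((2(1-2u)v - u(1-u))² + 8u(1-u)(v² - N₀))]/4. Then M₂(u,v) ≤ (2 + √(4 + 2(1 - N₀)))/4 = 1/2 + (√2/4)√(3 - N₀) for all (u,v) ∈ Ω. -/
import Mathlib


/-- For `(u,v) ∈ [0,1] × [-1,1]` and `N₀ ≤ -1`, the quantity `M₂(u,v)` satisfies
`M₂ ≤ (2 + √(4 + 2(1-N₀)))/4 = 1/2 + (√2/4)√(3 - N₀)`. -/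
theorem stmt_8 (u v N₀ : ℝ) (hu : u ∈ Set.Icc (0:ℝ) 1) (hv : v ∈ Set.Icc (-1:ℝ) 1)
    (hN₀ : N₀ ≤ -1) :
    (-(2 * (1 - 2 * u) * v - u * (1 - u)) +
        Real.sqrt ((2 * (1 - 2 * u) * v - u * (1 - u)) ^ 2 +
          8 * u * (1 - u) * (v ^ 2 - N₀))) / 4
      ≤ (2 + Real.sqrt (4 + 2 * (1 - N₀))) / 4 ∧
    (2 + Real.sqrt (4 + 2 * (1 - N₀))) / 4
      = 1 / 2 + Real.sqrt 2 / 4 * Real.sqrt (3 - N₀) := by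
  obtain ⟨hu0, hu1⟩ := hu
  obtain ⟨hv0, hv1⟩ := hv
  constructor
  · -- main inequality
    have h1 : -(2 * (1 - 2 * u) * v - u * (1 - u)) ≤ 2 := by
      rcases le_total u (1/2) with h | h
      · nlinarith [mul_nonneg (sub_nonneg.2 hv1) (by linarith : (0:ℝ) ≤ 1 - 2*u),
          mul_nonneg (by linarith : (0:ℝ) ≤ 1 + v) (by linarith : (0:ℝ) ≤ 1 - 2*u)]
      · nlinarith [mul_nonneg (sub_nonneg.2 hv1) (by linarith : (0:ℝ) ≤ 2*u - 1),
          mul_nonneg (by linarith : (0:ℝ) ≤ 1 + v) (by linarith : (0:ℝ) ≤ 2*u - 1)]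
    have h1' : 2 * (1 - 2 * u) * v - u * (1 - u) ≤ 2 := by
      rcases le_total u (1/2) with h | h
      · nlinarith [mul_nonneg (sub_nonneg.2 hv1) (by linarith : (0:ℝ) ≤ 1 - 2*u),
          mul_nonneg (by linarith : (0:ℝ) ≤ 1 + v) (by linarith : (0:ℝ) ≤ 1 - 2*u)]
      · nlinarith [mul_nonneg (sub_nonneg.2 hv1) (by linarith : (0:ℝ) ≤ 2*u - 1),
          mul_nonneg (by linarith : (0:ℝ) ≤ 1 + v) (by linarith : (0:ℝ) ≤ 2*u - 1)]
    have ht0 : 0 ≤ u * (1 - u) := mul_nonneg hu0 (by linarith)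
    have ht4 : u * (1 - u) ≤ 1/4 := by nlinarith [sq_nonneg (1 - 2*u)]
    have h2 : (2 * (1 - 2 * u) * v - u * (1 - u)) ^ 2 +
        8 * u * (1 - u) * (v ^ 2 - N₀) ≤ 4 + 2 * (1 - N₀) := by
      nlinarith [mul_nonneg (mul_nonneg ht0 (by linarith : (0:ℝ) ≤ 1 - N₀)) (by linarith : (0:ℝ) ≤ 1 - 4 * (u * (1-u))),
        mul_nonneg ht0 (mul_nonneg (sub_nonneg.2 hv1) (by linarith : (0:ℝ) ≤ 1 + v)),
        mul_nonneg (by linarith : (0:ℝ) ≤ 2 - (2 * (1 - 2 * u) * v - u * (1 - u)))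
          (by linarith : (0:ℝ) ≤ 2 + (2 * (1 - 2 * u) * v - u * (1 - u)))]
    have hs : Real.sqrt ((2 * (1 - 2 * u) * v - u * (1 - u)) ^ 2 +
        8 * u * (1 - u) * (v ^ 2 - N₀)) ≤ Real.sqrt (4 + 2 * (1 - N₀)) :=
      Real.sqrt_le_sqrt h2
    linarith
  · -- equality of the two expressions
    have : (4 + 2 * (1 - N₀)) = 2 * (3 - N₀) := by ring
    rw [this, Real.sqrt_mul (by norm_num : (0:ℝ) ≤ 2)]
    ring
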